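/- Let m ≥ 2, let I ⊆ ℝ be an interval, t_0 ∈ I, let κ_0, …, κ_{m−1} : I → ℝ be smooth functions, and let X_1, …, X_m : I → ℝ^m be smooth maps satisfying the Frenet system X_1' = κ_0 κ_1 X_2, X_i' = κ_0(−κ_{i−1} X_{i−1} + κ_i X_{i+1}) for 2 ≤ i ≤ m−1, and X_m' = −κ_0 κ_{m−1} X_{m−1}. If (X_1(t_0), …, X_m(t_0)) is an orthonormal basis of ℝ^m, then (X_1(t), …, X_m(t)) is an orthonormal basis for every t ∈ I, and the determinant det(X_1(t), …, X_m(t)) is constant on I; in particular if the initial frame is positively oriented, the frame stays positively oriented. -/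

import Mathlib

open scoped RealInnerProductSpace

private def frA (m : ℕ) (κ0 : ℝ → ℝ) (κ : Fin m → ℝ → ℝ) (s : ℝ) (i j : Fin m) : ℝ :=
  if (j:ℕ) = (i:ℕ)+1 then κ0 s * κ j s
  else if (i:ℕ) = (j:ℕ)+1 then -(κ0 s * κ i s) else 0

private lemma frA_skew (m : ℕ) (κ0 : ℝ → ℝ) (κ : Fin m → ℝ → ℝ) (s : ℝ) (i j : Fin m) :
    frA m κ0 κ s j i = - frA m κ0 κ s i j := by
  simp only [frA]; split_ifs <;> first | omega | ring

private def frV (m : ℕ) (κ0 : ℝ → ℝ) (κ : Fin m → ℝ → ℝ) (a b : ℝ) (s : ℝ)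
    (G : Fin m → Fin m → ℝ) : Fin m → Fin m → ℝ := fun i j =>
  (∑ k, frA m κ0 κ (max a (min s b)) i k * G k j)
    + ∑ k, frA m κ0 κ (max a (min s b)) j k * G i k

/-- **A solution of the Frenet system with orthonormal initial frame stays an orthonormal
frame, with constant determinant** (key step in the proof of Theorem `ecsfrenet`): let
`I ⊆ ℝ` be an interval (a convex set), `t₀ ∈ I`, let `κ₀,…,κ_{m-1}` be smooth functions
and `X₁,…,X_m : I → ℝᵐ` smooth maps (here `0`-indexed `X 0,…,X (m-1)`) satisfying
`X₁' = κ₀ κ₁ X₂`, `Xᵢ' = κ₀(−κ_{i−1} X_{i−1} + κᵢ X_{i+1})` for `2 ≤ i ≤ m−1`, and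
`X_m' = −κ₀ κ_{m−1} X_{m−1}`. If `(X₁(t₀),…,X_m(t₀))` is orthonormal then
`(X₁(t),…,X_m(t))` is orthonormal for every `t ∈ I` (hence an orthonormal basis),
`det(X₁(t),…,X_m(t))` is constant on `I`, and in particular if the initial frame is
positively oriented it stays positively oriented. -/
theorem frenet_system_preserves_orthonormal_frame
    (m : ℕ) (hm : 2 ≤ m) (I : Set ℝ) (hI : Convex ℝ I) (t₀ : ℝ) (ht₀ : t₀ ∈ I)
    (κ : Fin m → ℝ → ℝ) (X : Fin m → ℝ → EuclideanSpace ℝ (Fin m))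
    (hκ : ∀ i, ContDiffOn ℝ (⊤ : ℕ∞) (κ i) I)
    (hX : ∀ i, ContDiffOn ℝ (⊤ : ℕ∞) (X i) I)
    (hfirst : ∀ t ∈ I,
      deriv (X ⟨0, by omega⟩) t
        = (κ ⟨0, by omega⟩ t * κ ⟨1, by omega⟩ t) • X ⟨1, by omega⟩ t)
    (hmid : ∀ t ∈ I, ∀ i : ℕ, ∀ _h1 : 1 ≤ i, ∀ _h2 : i < m - 1,
      deriv (X ⟨i, by omega⟩) t
        = κ ⟨0, by omega⟩ t •
            ((-(κ ⟨i, by omega⟩ t)) • X ⟨i - 1, by omega⟩ t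
              + κ ⟨i + 1, by omega⟩ t • X ⟨i + 1, by omega⟩ t))
    (hlast : ∀ t ∈ I,
      deriv (X ⟨m - 1, by omega⟩) t
        = (-(κ ⟨0, by omega⟩ t * κ ⟨m - 1, by omega⟩ t)) • X ⟨m - 2, by omega⟩ t)
    (h₀ : Orthonormal ℝ (fun i => X i t₀)) :
    (∀ t ∈ I, Orthonormal ℝ (fun i => X i t)) ∧
    (∀ t ∈ I,
      Matrix.det (Matrix.of fun i j : Fin m => X i t j)
        = Matrix.det (Matrix.of fun i j : Fin m => X i t₀ j)) ∧
    (0 < Matrix.det (Matrix.of fun i j : Fin m => X i t₀ j) →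
      ∀ t ∈ I, 0 < Matrix.det (Matrix.of fun i j : Fin m => X i t j)) := by
  classical
  set κ0 : ℝ → ℝ := κ ⟨0, by omega⟩ with hκ0def
  -- the matrix of the Frenet system and the derivative formula
  have hsingle : ∀ (c : ℕ) (f : Fin m → EuclideanSpace ℝ (Fin m)),
      (∑ k : Fin m, if (k:ℕ) = c then f k else 0) = if h : c < m then f ⟨c, h⟩ else 0 := by
    intro c f
    by_cases h : c < m
    · rw [dif_pos h, Finset.sum_eq_single (⟨c, h⟩ : Fin m)]
      · simp
      · intro b _ hb
        exact if_neg fun hbc => hb (Fin.ext hbc)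
      · intro h'; exact absurd (Finset.mem_univ _) h'
    · rw [dif_neg h]
      exact Finset.sum_eq_zero fun k _ => if_neg fun hk => h (lt_of_eq_of_lt hk.symm k.isLt)
  have hsum : ∀ (s : ℝ) (i : Fin m),
      (∑ k, frA m κ0 κ s i k • X k s)
        = (∑ k : Fin m, if (k:ℕ) = (i:ℕ)+1 then (κ0 s * κ k s) • X k s else 0)
          + (∑ k : Fin m, if (i:ℕ) = (k:ℕ)+1 then (-(κ0 s * κ i s)) • X k s else 0) := by
    intro s i
    rw [← Finset.sum_add_distrib]
    refine Finset.sum_congr rfl fun k _ => ?_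
    simp only [frA]
    split_ifs <;> first | omega | simp
  have hderiv : ∀ (i : Fin m), ∀ s ∈ I, deriv (X i) s = ∑ k, frA m κ0 κ s i k • X k s := by
    rintro ⟨iv, hiv⟩ s hs
    rw [hsum]
    simp only [Fin.val_mk]
    rcases Nat.lt_or_ge iv 1 with h0 | h1
    · have hiv0 : iv = 0 := by omega
      subst hiv0
      refine (hfirst s hs).trans ?_
      rw [hsingle, dif_pos (show 0 + 1 < m by omega),
        Finset.sum_eq_zero (fun k _ => if_neg (by omega)), add_zero]
    · rcases Nat.lt_or_ge iv (m-1) with h2 | h2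
      · -- middle case
        have e2 : (∑ k : Fin m, if iv = (k:ℕ) + 1 then (-(κ0 s * κ ⟨iv, hiv⟩ s)) • X k s else 0)
            = (-(κ0 s * κ ⟨iv, hiv⟩ s)) • X ⟨iv - 1, by omega⟩ s := by
          have e2a : (∑ k : Fin m, if iv = (k:ℕ) + 1 then (-(κ0 s * κ ⟨iv, hiv⟩ s)) • X k s else 0)
              = ∑ k : Fin m, if (k:ℕ) = iv - 1 then (-(κ0 s * κ ⟨iv, hiv⟩ s)) • X k s else 0 :=
            Finset.sum_congr rfl fun k _ => if_congr (by omega) rfl rfl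
          rw [e2a, hsingle, dif_pos (show iv - 1 < m by omega)]
        refine (hmid s hs iv h1 h2).trans ?_
        rw [e2, hsingle, dif_pos (show iv + 1 < m by omega),
          smul_add, smul_smul, smul_smul, mul_neg, add_comm]
      · have hivm : iv = m - 1 := by omega
        subst hivm
        have e2 : (∑ k : Fin m, if m - 1 = (k:ℕ) + 1 then (-(κ0 s * κ ⟨m - 1, hiv⟩ s)) • X k s else 0)
            = (-(κ0 s * κ ⟨m - 1, hiv⟩ s)) • X ⟨m - 2, by omega⟩ s := by
          have e2a : (∑ k : Fin m, if m - 1 = (k:ℕ) + 1 then (-(κ0 s * κ ⟨m - 1, hiv⟩ s)) • X k s else 0)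
              = ∑ k : Fin m, if (k:ℕ) = m - 2 then (-(κ0 s * κ ⟨m - 1, hiv⟩ s)) • X k s else 0 :=
            Finset.sum_congr rfl fun k _ => if_congr (by omega) rfl rfl
          rw [e2a, hsingle, dif_pos (show m - 2 < m by omega)]
        refine (hlast s hs).trans ?_
        rw [e2, hsingle, dif_neg (show ¬ (m - 1 + 1 < m) by omega), zero_add]
  -- the Gram function
  set F : ℝ → Fin m → Fin m → ℝ := fun s i j => ⟪X i s, X j s⟫ with hFdef
  set δ : Fin m → Fin m → ℝ := fun i j => if i = j then 1 else 0 with hδdef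
  have hinit : F t₀ = δ := by
    funext i j
    exact orthonormal_iff_ite.mp h₀ i j
  -- master step on compact subintervals
  have master : ∀ a b : ℝ, a < b → Set.Icc a b ⊆ I → ∀ c, (c = a ∨ c = b) → F c = δ →
      ∀ u ∈ Set.Icc a b, F u = δ := by
    intro a b hab hsub c hc hcinit
    have hcomp : IsCompact (Set.Icc a b) := isCompact_Icc
    have hUD : UniqueDiffOn ℝ (Set.Icc a b) := uniqueDiffOn_Icc hab
    have hXS : ∀ i, ContDiffOn ℝ (⊤ : ℕ∞) (X i) (Set.Icc a b) := fun i => (hX i).mono hsub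
    have hXc : ∀ i, ContinuousOn (X i) (Set.Icc a b) := fun i => (hXS i).continuousOn
    have hAc : ∀ i j : Fin m, ContinuousOn (fun s => frA m κ0 κ s i j) (Set.Icc a b) := by
      intro i j
      have hk : ∀ l : Fin m, ContinuousOn (κ l) (Set.Icc a b) :=
        fun l => (hκ l).continuousOn.mono hsub
      have hk0 : ContinuousOn κ0 (Set.Icc a b) := hk _
      by_cases h1 : (j:ℕ) = (i:ℕ)+1
      · simp only [frA, if_pos h1]; exact hk0.mul (hk j)
      · by_cases h2 : (i:ℕ) = (j:ℕ)+1
        · simp only [frA, if_neg h1, if_pos h2]; exact (hk0.mul (hk i)).neg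
        · simp only [frA, if_neg h1, if_neg h2]; exact continuousOn_const
    -- uniform bound on the coefficients
    obtain ⟨C, hC⟩ := hcomp.exists_bound_of_continuousOn
      (continuousOn_finset_sum Finset.univ fun i _ =>
        continuousOn_finset_sum Finset.univ fun j _ => (hAc i j).abs)
    set C' : ℝ := max C 0 with hC'def
    have hC'0 : 0 ≤ C' := le_max_right _ _
    have hA_bound : ∀ s ∈ Set.Icc a b, ∀ i j : Fin m, |frA m κ0 κ s i j| ≤ C' := by
      intro s hs i j
      have h1 : |frA m κ0 κ s i j| ≤ ∑ j' : Fin m, |frA m κ0 κ s i j'| :=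
        Finset.single_le_sum (f := fun j' => |frA m κ0 κ s i j'|)
          (fun k _ => abs_nonneg _) (Finset.mem_univ j)
      have h2 : (∑ j' : Fin m, |frA m κ0 κ s i j'|)
          ≤ ∑ i' : Fin m, ∑ j' : Fin m, |frA m κ0 κ s i' j'| :=
        Finset.single_le_sum (f := fun i' => ∑ j' : Fin m, |frA m κ0 κ s i' j'|)
          (fun k _ => Finset.sum_nonneg fun l _ => abs_nonneg _) (Finset.mem_univ i)
      have h3 := hC s hs
      rw [Real.norm_eq_abs,
        abs_of_nonneg (Finset.sum_nonneg fun k _ => Finset.sum_nonneg fun l _ => abs_nonneg _)]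
        at h3
      exact le_max_of_le_left ((h1.trans h2).trans h3)
    have hπmem : ∀ s : ℝ, max a (min s b) ∈ Set.Icc a b :=
      fun s => ⟨le_max_left _ _, max_le hab.le (min_le_right s b)⟩
    have hπid : ∀ s ∈ Set.Icc a b, max a (min s b) = s := by
      intro s hs
      rw [min_eq_left hs.2, max_eq_right hs.1]
    -- Lipschitz estimate for the vector field
    set K : NNReal := Real.toNNReal (2 * (m * C')) with hKdef
    have hlip : ∀ s : ℝ, LipschitzOnWith K (frV m κ0 κ a b s) Set.univ := by
      intro s
      refine (LipschitzWith.of_dist_le_mul fun G G' => ?_).lipschitzOnWith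
      rw [hKdef, Real.coe_toNNReal _ (by positivity)]
      have hw : ∀ p q : Fin m, |G p q - G' p q| ≤ dist G G' := by
        intro p q
        rw [← Real.dist_eq]
        exact (dist_le_pi_dist (G p) (G' p) q).trans (dist_le_pi_dist G G' p)
      have hrow : ∀ (i' : Fin m) (w w' : Fin m → ℝ), (∀ k, |w k - w' k| ≤ dist G G') →
          |(∑ k, frA m κ0 κ (max a (min s b)) i' k * w k)
            - ∑ k, frA m κ0 κ (max a (min s b)) i' k * w' k| ≤ m * (C' * dist G G') := by
        intro i' w w' hww
        rw [← Finset.sum_sub_distrib]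
        refine (Finset.abs_sum_le_sum_abs _ _).trans ?_
        have hterm : ∀ k ∈ Finset.univ,
            |frA m κ0 κ (max a (min s b)) i' k * w k
              - frA m κ0 κ (max a (min s b)) i' k * w' k| ≤ C' * dist G G' := by
          intro k _
          rw [← mul_sub, abs_mul]
          exact mul_le_mul (hA_bound _ (hπmem s) i' k) (hww k) (abs_nonneg _) hC'0
        refine (Finset.sum_le_sum hterm).trans ?_
        rw [Finset.sum_const, Finset.card_univ, Fintype.card_fin, nsmul_eq_mul]
      refine (dist_pi_le_iff (by positivity)).2 fun i => (dist_pi_le_iff (by positivity)).2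
        fun j => ?_
      rw [Real.dist_eq]
      have hsplit : frV m κ0 κ a b s G i j - frV m κ0 κ a b s G' i j
          = ((∑ k, frA m κ0 κ (max a (min s b)) i k * G k j)
              - ∑ k, frA m κ0 κ (max a (min s b)) i k * G' k j)
            + ((∑ k, frA m κ0 κ (max a (min s b)) j k * G i k)
              - ∑ k, frA m κ0 κ (max a (min s b)) j k * G' i k) := by
        simp only [frV]; ring
      rw [hsplit]
      calc |_ + _| ≤ _ + _ := abs_add_le _ _
        _ ≤ m * (C' * dist G G') + m * (C' * dist G G') :=
            add_le_add (hrow i (fun k => G k j) (fun k => G' k j) fun k => hw k j)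
              (hrow j (fun k => G i k) (fun k => G' i k) fun k => hw i k)
        _ = 2 * (m * C') * dist G G' := by ring
    -- derivative of each X i within the interval, including endpoints
    have hRc : ∀ i : Fin m, ContinuousOn (fun s => ∑ k, frA m κ0 κ s i k • X k s)
        (Set.Icc a b) :=
      fun i => continuousOn_finset_sum Finset.univ fun k _ => (hAc i k).smul (hXc k)
    have hdw : ∀ i, ContinuousOn (derivWithin (X i) (Set.Icc a b)) (Set.Icc a b) :=
      fun i => (hXS i).continuousOn_derivWithin hUD (by simp)
    have hIoo : ∀ i : Fin m, ∀ s ∈ Set.Ioo a b,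
        derivWithin (X i) (Set.Icc a b) s = ∑ k, frA m κ0 κ s i k • X k s := by
      intro i s hs
      rw [derivWithin_of_mem_nhds (Icc_mem_nhds hs.1 hs.2)]
      exact hderiv i s (hsub (Set.Ioo_subset_Icc_self hs))
    have hEq : ∀ i : Fin m, ∀ s ∈ Set.Icc a b,
        derivWithin (X i) (Set.Icc a b) s = ∑ k, frA m κ0 κ s i k • X k s := by
      intro i s hs
      rcases eq_or_ne s a with rfl | hsa
      · haveI := left_nhdsWithin_Ioo_neBot hab
        refine tendsto_nhds_unique
          (((hdw i s ⟨le_rfl, hab.le⟩).mono_left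
            (nhdsWithin_mono s Set.Ioo_subset_Icc_self)))
          (Filter.Tendsto.congr'
            (eventually_mem_nhdsWithin.mono fun u hu => (hIoo i u hu).symm)
            ((hRc i s ⟨le_rfl, hab.le⟩).mono_left
              (nhdsWithin_mono s Set.Ioo_subset_Icc_self)))
      · rcases eq_or_ne s b with rfl | hsb
        · haveI := right_nhdsWithin_Ioo_neBot hab
          refine tendsto_nhds_unique
            (((hdw i s ⟨hab.le, le_rfl⟩).mono_left
              (nhdsWithin_mono s Set.Ioo_subset_Icc_self)))
            (Filter.Tendsto.congr'
              (eventually_mem_nhdsWithin.mono fun u hu => (hIoo i u hu).symm)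
              ((hRc i s ⟨hab.le, le_rfl⟩).mono_left
                (nhdsWithin_mono s Set.Ioo_subset_Icc_self)))
        · exact hIoo i s ⟨lt_of_le_of_ne hs.1 (Ne.symm hsa), lt_of_le_of_ne hs.2 hsb⟩
    have hXder : ∀ i : Fin m, ∀ s ∈ Set.Icc a b,
        HasDerivWithinAt (X i) (∑ k, frA m κ0 κ s i k • X k s) (Set.Icc a b) s := by
      intro i s hs
      have h := (((hXS i).differentiableOn (by simp)) s hs).hasDerivWithinAt
      rwa [hEq i s hs] at h
    -- the Gram function solves the linear ODE
    have hFder : ∀ s ∈ Set.Icc a b,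
        HasDerivWithinAt F (frV m κ0 κ a b s (F s)) (Set.Icc a b) s := by
      intro s hs
      refine hasDerivWithinAt_pi.2 fun i => hasDerivWithinAt_pi.2 fun j => ?_
      have h3 := (hXder i s hs).inner ℝ (hXder j s hs)
      have key : frV m κ0 κ a b s (F s) i j
          = ⟪X i s, ∑ k, frA m κ0 κ s j k • X k s⟫
            + ⟪(∑ k, frA m κ0 κ s i k • X k s), X j s⟫ := by
        simp only [frV, hπid s hs, hFdef]
        rw [inner_sum, sum_inner, add_comm]
        congr 1
        · exact Finset.sum_congr rfl fun k _ => (real_inner_smul_right _ _ _).symm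
        · exact Finset.sum_congr rfl fun k _ => (real_inner_smul_left _ _ _).symm
      rw [key]
      exact h3
    -- the constant function δ solves the same ODE
    have hconstsol : ∀ s : ℝ, frV m κ0 κ a b s δ = 0 := by
      intro s
      funext i j
      simp only [frV, hδdef, mul_ite, mul_one, mul_zero]
      rw [Finset.sum_ite_eq' Finset.univ j (fun k => frA m κ0 κ (max a (min s b)) i k),
        Finset.sum_ite_eq Finset.univ i (fun k => frA m κ0 κ (max a (min s b)) j k)]
      simp [frA_skew m κ0 κ _ j i]
    have hFc : ContinuousOn F (Set.Icc a b) :=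
      continuousOn_pi.2 fun i => continuousOn_pi.2 fun j => (hXc i).inner (hXc j)
    -- apply uniqueness of ODE solutions
    rcases hc with rfl | rfl
    · have heq : Set.EqOn F (fun _ => δ) (Set.Icc c b) := by
        refine ODE_solution_unique_of_mem_Icc_right (v := frV m κ0 κ c b)
          (s := fun _ => Set.univ) (K := K) (fun t _ => hlip t) hFc ?_ (fun _ _ => trivial)
          continuousOn_const ?_ (fun _ _ => trivial) hcinit
        · intro u hu
          refine (hFder u (Set.Ico_subset_Icc_self hu)).mono_of_mem_nhdsWithin ?_
          exact mem_nhdsWithin.mpr ⟨Set.Iio b, isOpen_Iio, hu.2,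
            fun y hy => ⟨hu.1.trans hy.2, hy.1.le⟩⟩
        · intro u hu
          have h0 : HasDerivWithinAt (fun _ : ℝ => δ) 0 (Set.Ici u) u :=
            hasDerivWithinAt_const u _ δ
          rw [show frV m κ0 κ c b u ((fun _ => δ) u) = 0 from hconstsol u]
          exact h0
      exact fun u hu => heq hu
    · have heq : Set.EqOn F (fun _ => δ) (Set.Icc a c) := by
        refine ODE_solution_unique_of_mem_Icc_left (v := frV m κ0 κ a c)
          (s := fun _ => Set.univ) (K := K) (fun t _ => hlip t) hFc ?_ (fun _ _ => trivial)
          continuousOn_const ?_ (fun _ _ => trivial) hcinit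
        · intro u hu
          refine (hFder u (Set.Ioc_subset_Icc_self hu)).mono_of_mem_nhdsWithin ?_
          exact mem_nhdsWithin.mpr ⟨Set.Ioi a, isOpen_Ioi, hu.1,
            fun y hy => ⟨hy.1.le, hy.2.trans hu.2⟩⟩
        · intro u hu
          have h0 : HasDerivWithinAt (fun _ : ℝ => δ) 0 (Set.Iic u) u :=
            hasDerivWithinAt_const u _ δ
          rw [show frV m κ0 κ a c u ((fun _ => δ) u) = 0 from hconstsol u]
          exact h0
      exact fun u hu => heq hu
  -- the Gram matrix is the identity everywhere on I
  have hGram : ∀ t ∈ I, F t = δ := by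
    intro t ht
    rcases eq_or_ne t t₀ with rfl | hne
    · exact hinit
    rcases hne.lt_or_gt with hlt | hlt
    · exact master t t₀ hlt (hI.ordConnected.out ht ht₀) t₀ (Or.inr rfl) hinit t
        ⟨le_rfl, hlt.le⟩
    · exact master t₀ t hlt (hI.ordConnected.out ht₀ ht) t₀ (Or.inl rfl) hinit t
        ⟨hlt.le, le_rfl⟩
  have horth : ∀ t ∈ I, Orthonormal ℝ (fun i => X i t) := by
    intro t ht
    refine orthonormal_iff_ite.mpr fun i j => ?_
    exact congrFun (congrFun (hGram t ht) i) j
  -- the Gram matrix identity in matrix form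
  have hMul : ∀ t ∈ I,
      (Matrix.of fun i j : Fin m => X i t j)
          * Matrix.transpose (Matrix.of fun i j : Fin m => X i t j)
        = (1 : Matrix (Fin m) (Fin m) ℝ) := by
    intro t ht
    ext i j
    have h := congrFun (congrFun (hGram t ht) i) j
    simp only [hFdef, hδdef, PiLp.inner_apply, RCLike.inner_apply, conj_trivial] at h
    simp only [Matrix.mul_apply, Matrix.transpose_apply, Matrix.of_apply, Matrix.one_apply]
    exact (Finset.sum_congr rfl fun x _ => mul_comm _ _).trans h
  have hsq : ∀ t ∈ I,
      Matrix.det (Matrix.of fun i j : Fin m => X i t j)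
        * Matrix.det (Matrix.of fun i j : Fin m => X i t j) = 1 := by
    intro t ht
    have h := congrArg Matrix.det (hMul t ht)
    rwa [Matrix.det_mul, Matrix.det_transpose, Matrix.det_one] at h
  have hdetc : ContinuousOn (fun t => Matrix.det (Matrix.of fun i j : Fin m => X i t j)) I := by
    refine (Continuous.matrix_det continuous_id).comp_continuousOn ?_
    exact continuousOn_pi.2 fun i => continuousOn_pi.2 fun j =>
      (EuclideanSpace.proj j : EuclideanSpace ℝ (Fin m) →L[ℝ] ℝ).continuous.comp_continuousOn (hX i).continuousOn
  have hconst : ∀ t ∈ I,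
      Matrix.det (Matrix.of fun i j : Fin m => X i t j)
        = Matrix.det (Matrix.of fun i j : Fin m => X i t₀ j) := by
    intro t ht
    by_contra hne
    have hpm : ∀ u ∈ I, Matrix.det (Matrix.of fun i j : Fin m => X i u j) = 1
        ∨ Matrix.det (Matrix.of fun i j : Fin m => X i u j) = -1 :=
      fun u hu => mul_self_eq_one_iff.mp (hsq u hu)
    have hmid0 : ∃ u ∈ I, Matrix.det (Matrix.of fun i j : Fin m => X i u j) = 0 := by
      rcases hpm t ht with h1 | h1 <;> rcases hpm t₀ ht₀ with h2 | h2
      · exact absurd (h1.trans h2.symm) hne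
      · have h0 : (0:ℝ) ∈ Set.Icc
            (Matrix.det (Matrix.of fun i j : Fin m => X i t₀ j))
            (Matrix.det (Matrix.of fun i j : Fin m => X i t j)) := by
          rw [h1, h2]; constructor <;> norm_num
        obtain ⟨u, hu, hu0⟩ := hI.isPreconnected.intermediate_value ht₀ ht hdetc h0
        exact ⟨u, hu, hu0⟩
      · have h0 : (0:ℝ) ∈ Set.Icc
            (Matrix.det (Matrix.of fun i j : Fin m => X i t j))
            (Matrix.det (Matrix.of fun i j : Fin m => X i t₀ j)) := by
          rw [h1, h2]; constructor <;> norm_num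
        obtain ⟨u, hu, hu0⟩ := hI.isPreconnected.intermediate_value ht ht₀ hdetc h0
        exact ⟨u, hu, hu0⟩
      · exact absurd (h1.trans h2.symm) hne
    obtain ⟨u, hu, hu0⟩ := hmid0
    rcases hpm u hu with h | h <;> rw [hu0] at h <;> norm_num at h
  refine ⟨horth, hconst, fun hpos t ht => ?_⟩
  rw [hconst t ht]
  exact hpos
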